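/- Let D ∈ {ℂ, ℍ} with standard basis I_D, and let W, Y, Z ∈ I_D with D = ℍ and τ_Y(x) = YxY^{-1}. Then ∑_{X ∈ I_ℍ} (XW)·conj(τ_Y(XZ)) equals 4·conj(Z)·W when Y = ±(W̄Z), and equals 0 otherwise. -/

import Mathlib

/-- The quaternion `i`. -/
noncomputable def qI : Quaternion ℝ := ⟨0, 1, 0, 0⟩
/-- The quaternion `j`. -/
noncomputable def qJ : Quaternion ℝ := ⟨0, 0, 1, 0⟩
/-- The quaternion `k`. -/
noncomputable def qK : Quaternion ℝ := ⟨0, 0, 0, 1⟩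

/-- Partial conjugation on `ℍ`: `τ_Y(x) = Y x Y⁻¹`. -/
noncomputable def tauH (Y x : Quaternion ℝ) : Quaternion ℝ := Y * x * Y⁻¹

/-- The sum `∑_{X ∈ {1,i,j,k}} (X W) · conj (τ_Y (X Z))`. -/
noncomputable def quatSum (W Y Z : Quaternion ℝ) : Quaternion ℝ :=
  (1 * W) * star (tauH Y (1 * Z)) + (qI * W) * star (tauH Y (qI * Z)) +
    (qJ * W) * star (tauH Y (qJ * Z)) + (qK * W) * star (tauH Y (qK * Z))

/-! ### auxiliary lemmas -/

lemma star_qI : star qI = -qI := by ext <;> simp <;> simp [qI]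
lemma star_qJ : star qJ = -qJ := by ext <;> simp <;> simp [qJ]
lemma star_qK : star qK = -qK := by ext <;> simp <;> simp [qK]

lemma qII : qI * qI = -1 := by ext <;> simp [Quaternion.re_mul, Quaternion.imI_mul, Quaternion.imJ_mul, Quaternion.imK_mul, Quaternion.re_one, Quaternion.imI_one, Quaternion.imJ_one, Quaternion.imK_one] <;> simp [qI]
lemma qIJ : qI * qJ = qK := by ext <;> simp [Quaternion.re_mul, Quaternion.imI_mul, Quaternion.imJ_mul, Quaternion.imK_mul, Quaternion.re_one, Quaternion.imI_one, Quaternion.imJ_one, Quaternion.imK_one] <;> simp [qI, qJ, qK]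
lemma qIK : qI * qK = -qJ := by ext <;> simp [Quaternion.re_mul, Quaternion.imI_mul, Quaternion.imJ_mul, Quaternion.imK_mul, Quaternion.re_one, Quaternion.imI_one, Quaternion.imJ_one, Quaternion.imK_one] <;> simp [qI, qJ, qK]
lemma qJI : qJ * qI = -qK := by ext <;> simp [Quaternion.re_mul, Quaternion.imI_mul, Quaternion.imJ_mul, Quaternion.imK_mul, Quaternion.re_one, Quaternion.imI_one, Quaternion.imJ_one, Quaternion.imK_one] <;> simp [qI, qJ, qK]
lemma qJJ : qJ * qJ = -1 := by ext <;> simp [Quaternion.re_mul, Quaternion.imI_mul, Quaternion.imJ_mul, Quaternion.imK_mul, Quaternion.re_one, Quaternion.imI_one, Quaternion.imJ_one, Quaternion.imK_one] <;> simp [qJ]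
lemma qJK : qJ * qK = qI := by ext <;> simp [Quaternion.re_mul, Quaternion.imI_mul, Quaternion.imJ_mul, Quaternion.imK_mul, Quaternion.re_one, Quaternion.imI_one, Quaternion.imJ_one, Quaternion.imK_one] <;> simp [qI, qJ, qK]
lemma qKI : qK * qI = qJ := by ext <;> simp [Quaternion.re_mul, Quaternion.imI_mul, Quaternion.imJ_mul, Quaternion.imK_mul, Quaternion.re_one, Quaternion.imI_one, Quaternion.imJ_one, Quaternion.imK_one] <;> simp [qI, qJ, qK]
lemma qKJ : qK * qJ = -qI := by ext <;> simp [Quaternion.re_mul, Quaternion.imI_mul, Quaternion.imJ_mul, Quaternion.imK_mul, Quaternion.re_one, Quaternion.imI_one, Quaternion.imJ_one, Quaternion.imK_one] <;> simp [qI, qJ, qK]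
lemma qKK : qK * qK = -1 := by ext <;> simp [Quaternion.re_mul, Quaternion.imI_mul, Quaternion.imJ_mul, Quaternion.imK_mul, Quaternion.re_one, Quaternion.imI_one, Quaternion.imJ_one, Quaternion.imK_one] <;> simp [qK]

lemma qI_inv : qI⁻¹ = -qI := by
  apply inv_eq_of_mul_eq_one_right; rw [mul_neg, qII, neg_neg]
lemma qJ_inv : qJ⁻¹ = -qJ := by
  apply inv_eq_of_mul_eq_one_right; rw [mul_neg, qJJ, neg_neg]
lemma qK_inv : qK⁻¹ = -qK := by
  apply inv_eq_of_mul_eq_one_right; rw [mul_neg, qKK, neg_neg]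

/-- signed basis elements -/
def SB (x : Quaternion ℝ) : Prop :=
  x = 1 ∨ x = -1 ∨ x = qI ∨ x = -qI ∨ x = qJ ∨ x = -qJ ∨ x = qK ∨ x = -qK

lemma SB_star {x : Quaternion ℝ} (h : SB x) : SB (star x) := by
  rcases h with rfl|rfl|rfl|rfl|rfl|rfl|rfl|rfl <;>
    simp [SB, star_qI, star_qJ, star_qK]

lemma SB_mul {x y : Quaternion ℝ} (hx : SB x) (hy : SB y) : SB (x * y) := by
  rcases hx with rfl|rfl|rfl|rfl|rfl|rfl|rfl|rfl <;>
    rcases hy with rfl|rfl|rfl|rfl|rfl|rfl|rfl|rfl <;>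
    simp [SB, qII, qIJ, qIK, qJI, qJJ, qJK, qKI, qKJ, qKK]

lemma basis_SB {x : Quaternion ℝ} (h : x = 1 ∨ x = qI ∨ x = qJ ∨ x = qK) : SB x := by
  rcases h with rfl|rfl|rfl|rfl <;> simp [SB]

lemma basis_inv {Y : Quaternion ℝ} (h : Y = 1 ∨ Y = qI ∨ Y = qJ ∨ Y = qK) :
    Y⁻¹ = star Y := by
  rcases h with rfl|rfl|rfl|rfl <;>
    simp [qI_inv, qJ_inv, qK_inv, star_qI, star_qJ, star_qK]

lemma basis_mul_star {W : Quaternion ℝ} (h : W = 1 ∨ W = qI ∨ W = qJ ∨ W = qK) :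
    W * star W = 1 := by
  rcases h with rfl|rfl|rfl|rfl <;>
    simp [star_qI, star_qJ, star_qK, qII, qJJ, qKK]

lemma star_mul_basis {W : Quaternion ℝ} (h : W = 1 ∨ W = qI ∨ W = qJ ∨ W = qK) :
    star W * W = 1 := by
  rcases h with rfl|rfl|rfl|rfl <;>
    simp [star_qI, star_qJ, star_qK, qII, qJJ, qKK]

@[simp] lemma re4 : (4:Quaternion ℝ).re = 4 := rfl
@[simp] lemma imI4 : (4:Quaternion ℝ).imI = 0 := rfl
@[simp] lemma imJ4 : (4:Quaternion ℝ).imJ = 0 := rfl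
@[simp] lemma imK4 : (4:Quaternion ℝ).imK = 0 := rfl

lemma sum_conj (a : Quaternion ℝ) :
    1 * a * star 1 + qI * a * star qI + qJ * a * star qJ + qK * a * star qK =
      4 * ((a.re : ℝ) : Quaternion ℝ) := by
  ext <;>
    simp [Quaternion.re_mul, Quaternion.imI_mul, Quaternion.imJ_mul, Quaternion.imK_mul, Quaternion.re_one, Quaternion.imI_one, Quaternion.imJ_one, Quaternion.imK_one] <;> simp [qI, qJ, qK] <;> ring

lemma quatSum_eq (W Y Z : Quaternion ℝ) (hY : Y⁻¹ = star Y) :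
    quatSum W Y Z = 4 * (((W * (Y * star Z)).re : ℝ) : Quaternion ℝ) * star Y := by
  have h1 :
      (1 * (W * (Y * star Z)) * star 1 + qI * (W * (Y * star Z)) * star qI +
        qJ * (W * (Y * star Z)) * star qJ + qK * (W * (Y * star Z)) * star qK) * star Y =
      4 * (((W * (Y * star Z)).re : ℝ) : Quaternion ℝ) * star Y := by
    rw [sum_conj]
  rw [← h1]
  simp only [quatSum, tauH, hY, star_mul, star_star]
  noncomm_ring

/-- For basis elements `W, Y, Z ∈ I_ℍ = {1, i, j, k}`, the sum
`∑_{X ∈ I_ℍ} (X W) · conj(τ_Y(X Z))` equals `4 · conj(Z) · W` when `Y = ±(conj W · Z)`,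
and equals `0` otherwise. -/
theorem stmt17 (W Y Z : Quaternion ℝ)
    (hW : W = 1 ∨ W = qI ∨ W = qJ ∨ W = qK)
    (hY : Y = 1 ∨ Y = qI ∨ Y = qJ ∨ Y = qK)
    (hZ : Z = 1 ∨ Z = qI ∨ Z = qJ ∨ Z = qK) :
    ((Y = star W * Z ∨ Y = -(star W * Z)) → quatSum W Y Z = 4 * star Z * W) ∧
    (¬(Y = star W * Z ∨ Y = -(star W * Z)) → quatSum W Y Z = 0) := by
  have hqs := quatSum_eq W Y Z (basis_inv hY)
  have hWW := basis_mul_star hW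
  have hWW' := star_mul_basis hW
  have hZZ := basis_mul_star hZ
  have hZZ' := star_mul_basis hZ
  constructor
  · rintro (h | h)
    · have hYsZ : Y * star Z = star W := by
        rw [h, mul_assoc, hZZ, mul_one]
      rw [hqs, hYsZ, hWW, h]
      simp only [Quaternion.re_one, Quaternion.coe_one, mul_one, star_mul, star_star,
        mul_assoc]
    · have hYsZ : Y * star Z = -star W := by
        rw [h, neg_mul, mul_assoc, hZZ, mul_one]
      rw [hqs, hYsZ, h]
      simp only [mul_neg, hWW, star_neg, star_mul, star_star]
      norm_num [Quaternion.re_one]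
      rw [mul_assoc]
  · intro h
    -- the real part of p := W * (Y * star Z) must be 0
    set p := W * (Y * star Z) with hp
    have hrecover : star W * (p * Z) = Y := by
      rw [hp, mul_assoc W (Y * star Z) Z, ← mul_assoc (star W) W, hWW', one_mul,
        mul_assoc Y, hZZ', mul_one]
    have hSB : SB p := SB_mul (basis_SB hW) (SB_mul (basis_SB hY) (SB_star (basis_SB hZ)))
    have hre : p.re = 0 := by
      rcases hSB with h1|h1|h1|h1|h1|h1|h1|h1
      · exfalso; apply h; left
        rw [← hrecover, h1, one_mul]
      · exfalso; apply h; right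
        rw [← hrecover, h1, neg_mul, one_mul, mul_neg]
      all_goals rw [h1]
      · rfl
      · simp; simp [qI]
      · rfl
      · simp; simp [qJ]
      · rfl
      · simp; simp [qK]
    rw [hqs, hre]
    simp
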